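/- arXiv:2007.01981 — 4 statements merged into one kernel-verified Lean document; each statement's English description precedes it below -/
import Mathlib

section
/- Every digraph core is pointed with respect to itself: if D is a digraph such that every acyclic homomorphism from D to itself is an automorphism, then there do not exist two acyclic homomorphisms ρ, φ : D → D that disagree at exactly one vertex of D. -/
/- A core's self-maps are bijections, and a surjection and an injection cannot differ at exactly
one vertex `v`: the vertex `w` that the surjection sends to the image of `v` under the injection
is not `v`, so the two maps agree at `w`, and injectivity forces `w = v`. -/

/-- An acyclic homomorphism from the digraph `(α, rD)` to the digraph `(β, rC)`:
arcs are mapped to arcs or collapsed, and every fiber induces an acyclic subdigraph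
(no directed closed walk within a fiber). -/
def AcyHom {α β : Type*} (rD : α → α → Prop) (rC : β → β → Prop) (ρ : α → β) : Prop :=
  (∀ u v, rD u v → ρ u = ρ v ∨ rC (ρ u) (ρ v)) ∧
  ∀ x : β, ¬ ∃ y, Relation.TransGen (fun u v => ρ u = x ∧ ρ v = x ∧ rD u v) y y

/-- An automorphism of the digraph `(α, r)`: a bijective acyclic self-homomorphism
whose inverse is also an acyclic homomorphism. -/
def IsDigraphAut {α : Type*} (r : α → α → Prop) (g : α → α) : Prop :=
  ∃ e : α ≃ α, ⇑e = g ∧ AcyHom r r ⇑e ∧ AcyHom r r ⇑e.symm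

theorem IsDigraphAut.bijective {α : Type*} {r : α → α → Prop} {g : α → α}
    (hg : IsDigraphAut r g) : Function.Bijective g := by
  obtain ⟨e, rfl, -, -⟩ := hg
  exact e.bijective

theorem Function.not_existsUnique_ne_of_surjective_of_injective {α β : Type*} {f g : α → β}
    (hf : Function.Surjective f) (hg : Function.Injective g) : ¬ ∃! v, f v ≠ g v := by
  rintro ⟨v, hv, huniq⟩
  obtain ⟨w, hw⟩ := hf (g v)
  have hwv : w ≠ v := by
    rintro rfl
    exact hv hw
  have hagree : f w = g w := by
    by_contra h
    exact hwv (huniq w h)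
  exact hwv (hg (hagree.symm.trans hw))

theorem core_is_self_pointed_general {V : Type*} (r : V → V → Prop)
    (hcore : ∀ ρ : V → V, AcyHom r r ρ → IsDigraphAut r ρ) :
    ¬ ∃ ρ φ : V → V, AcyHom r r ρ ∧ AcyHom r r φ ∧ (∃! v : V, ρ v ≠ φ v) := by
  rintro ⟨ρ, φ, hρ, hφ, hdiff⟩
  exact Function.not_existsUnique_ne_of_surjective_of_injective
    (hcore ρ hρ).bijective.surjective (hcore φ hφ).bijective.injective hdiff

/-- Every digraph core is pointed with respect to itself: if every acyclic
homomorphism of a (finite, loopless) digraph `D` to itself is an automorphism,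
then no two acyclic homomorphisms `D → D` disagree at exactly one vertex. -/
theorem core_is_self_pointed {V : Type*} [Fintype V] (r : V → V → Prop)
    (hloopless : Irreflexive r)
    (hcore : ∀ ρ : V → V, AcyHom r r ρ → IsDigraphAut r ρ) :
    ¬ ∃ ρ φ : V → V, AcyHom r r ρ ∧ AcyHom r r φ ∧ (∃! v : V, ρ v ≠ φ v) :=
  core_is_self_pointed_general r hcore
end

section
/- The composition of two acyclic homomorphisms need not fail: if ψ : D* → D is an acyclic homomorphism and f : D → C is an acyclic homomorphism, then f ∘ ψ : D* → C is an acyclic homomorphism. -/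
/-!
A directed cycle of `D*` inside a fibre of `f ∘ ψ` either lies in a single fibre of `ψ`,
or, after deleting the steps that `ψ` collapses, its image is a directed cycle of `D`
inside a fibre of `f`; both are excluded.
-/

namespace Relation

variable {α β : Type*}

def fiber (r : α → α → Prop) (g : α → β) (x : β) : α → α → Prop :=
  fun u v => g u = x ∧ g v = x ∧ r u v

theorem TransGen.fiber_left {r : α → α → Prop} {g : α → β} {x : β} {u v : α}
    (h : TransGen (fiber r g x) u v) : g u = x :=
  let ⟨_, hstep, _⟩ := head'_iff.mp h
  hstep.1

theorem TransGen.fiber_or_map {s : α → α → Prop} {r : β → β → Prop} {g : α → β}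
    (hs : ∀ u v, s u v → g u = g v ∨ r (g u) (g v)) {u v : α} (h : TransGen s u v) :
    TransGen (fiber s g (g v)) u v ∨ TransGen r (g u) (g v) := by
  induction h with
  | single hst =>
    rcases hs _ _ hst with heq | hr
    · exact .inl (.single ⟨heq, rfl, hst⟩)
    · exact .inr (.single hr)
  | @tail b c _ hbc ih =>
    rcases hs _ _ hbc, ih with ⟨heq | hr, hfib | hmap⟩
    · exact .inl ((heq ▸ hfib).tail ⟨heq, rfl, hbc⟩)
    · exact .inr (heq ▸ hmap)
    · exact .inr (.single (hfib.fiber_left ▸ hr))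
    · exact .inr (hmap.tail hr)

end Relation

open Relation in
theorem acyHom_comp_general {α β γ : Type*}
    (rDs : α → α → Prop) (rD : β → β → Prop) (rC : γ → γ → Prop)
    (ψ : α → β) (f : β → γ)
    (hψ : AcyHom rDs rD ψ) (hf : AcyHom rD rC f) :
    AcyHom rDs rC (f ∘ ψ) := by
  refine ⟨fun u v h => ?_, fun x ⟨y, hy⟩ => ?_⟩
  · rcases hψ.1 u v h with heq | hr
    · exact .inl (congrArg f heq)
    · exact hf.1 _ _ hr
  · have hstep : ∀ u v, fiber rDs (f ∘ ψ) x u v → ψ u = ψ v ∨ fiber rD f x (ψ u) (ψ v) :=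
      fun u v ⟨hu, hv, h⟩ => (hψ.1 u v h).imp_right fun hr => ⟨hu, hv, hr⟩
    rcases hy.fiber_or_map hstep with hcycle | hcycle
    · exact hψ.2 (ψ y) ⟨y, TransGen.mono (fun _ _ ⟨hp, hq, _, _, h⟩ => ⟨hp, hq, h⟩) _ _ hcycle⟩
    · exact hf.2 x ⟨ψ y, hcycle⟩

/-- The composition of two acyclic homomorphisms is an acyclic homomorphism. -/
theorem acyHom_comp {α β γ : Type*} [Fintype α] [Fintype β] [Fintype γ]
    (rDs : α → α → Prop) (rD : β → β → Prop) (rC : γ → γ → Prop)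
    (ψ : α → β) (f : β → γ)
    (hψ : AcyHom rDs rD ψ) (hf : AcyHom rD rC f) :
    AcyHom rDs rC (f ∘ ψ) :=
  acyHom_comp_general rDs rD rC ψ f hψ hf
end

section
/- The binomial bound on rare pairs: with the notation of the paper, L(b,s) ≤ C(n, n−(k−1)b) · C(n,b) · C((n−(k−1)b)·b, s) · p^s · (1−p)^{(n−(k−1)b)b − s}, where p = n^{ε−1}; consequently, summing over 1 ≤ b ≤ n/k and s ≤ min{b, ⌈n^{εℓ}⌉}, the total expected number of bad pairs is less than e^{−n^ε/6} for sufficiently large n. -/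
open Finset Real Filter Asymptotics

/-!
Bounding the binomial coefficients by powers of `n` and `1 - p` by `e^{-p}`, the `(b, s)` term is
at most `n^{(k+2)b} e^{-p((n-(k-1)b)b - b)}`. With `m = n - (k-1)b` we have `m ≥ n/k`, and by
concavity in `b` also `mb - b ≥ n - (k+1)²/4`; averaging the two, `p(mb - b)` exceeds
`(k+2) b log n` by `n^ε/4` as soon as `n^ε` dominates `log n`. The at most `n²` terms then cost
only a factor `e^{2 log n}`, which leaves `e^{-n^ε/6}`.
-/

lemma eventually_add_mul_log_le_rpow {ε : ℝ} (hε : 0 < ε) (c d : ℝ) :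
    ∀ᶠ n : ℕ in atTop, c + d * log n ≤ (n : ℝ) ^ ε := by
  have hlittle : (fun x : ℝ => c + d * log x) =o[atTop] fun x => x ^ ε :=
    (isLittleO_const_left.2 <| Or.inr <|
        tendsto_norm_atTop_atTop.comp (tendsto_rpow_atTop hε)).add
      ((isLittleO_log_rpow_atTop hε).const_mul_left d)
  have hreal : ∀ᶠ x : ℝ in atTop, c + d * log x ≤ x ^ ε := by
    filter_upwards [hlittle.eventuallyLE, eventually_ge_atTop 0] with x hx hx0
    rw [norm_of_nonneg (rpow_nonneg hx0 ε)] at hx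
    exact (le_abs_self _).trans hx
  exact tendsto_natCast_atTop_atTop.eventually hreal

lemma one_sub_pow_le_exp_neg_mul {p : ℝ} (hp : p ≤ 1) (N : ℕ) :
    (1 - p) ^ N ≤ exp (-(p * N)) := by
  calc (1 - p) ^ N ≤ exp (-p) ^ N :=
        pow_le_pow_left₀ (by linarith) (by linarith [add_one_le_exp (-p)]) N
    _ = exp (-(p * N)) := by rw [← exp_nat_mul]; ring_nf

lemma sum_Icc_le_mul {f : ℕ → ℝ} {m n : ℕ} {c : ℝ} (hmn : m ≤ n) (hc : 0 ≤ c)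
    (hf : ∀ i ∈ Icc 1 m, f i ≤ c) : ∑ i ∈ Icc 1 m, f i ≤ n * c := by
  calc ∑ i ∈ Icc 1 m, f i ≤ #(Icc 1 m) • c := sum_le_card_nsmul _ _ _ hf
    _ ≤ n * c := by
      rw [nsmul_eq_mul, Nat.card_Icc, Nat.add_sub_cancel]
      exact mul_le_mul_of_nonneg_right (by exact_mod_cast hmn) hc

lemma mul_mul_exp_neg_div_four_lt {x X : ℝ} (hx : 0 < x) (h : 24 * log x < X) :
    x * (x * exp (-X / 4)) < exp (-X / 6) := by
  rw [← exp_log hx, ← exp_add, ← exp_add]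
  exact exp_lt_exp.2 (by linarith)

lemma choose_mul_choose_mul_choose_le {n q b s : ℕ} (hq : q ≤ n) (hb : b ≤ n) (hs : s ≤ b) :
    n.choose (n - q) * n.choose b * ((n - q) * b).choose s ≤ n ^ (q + 3 * b) := by
  obtain rfl | hn := n.eq_zero_or_pos
  · simp_all
  have hlast : ((n - q) * b).choose s ≤ n ^ (2 * b) :=
    calc ((n - q) * b).choose s ≤ ((n - q) * b) ^ s := Nat.choose_le_pow _ _
      _ ≤ (n ^ 2) ^ s := Nat.pow_le_pow_left (by nlinarith [Nat.sub_le n q]) s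
      _ ≤ n ^ (2 * b) := by rw [← pow_mul]; exact Nat.pow_le_pow_right hn (by omega)
  rw [Nat.choose_symm hq]
  calc n.choose q * n.choose b * ((n - q) * b).choose s ≤ n ^ q * n ^ b * n ^ (2 * b) :=
        Nat.mul_le_mul (Nat.mul_le_mul (Nat.choose_le_pow n q) (Nat.choose_le_pow n b)) hlast
    _ = n ^ (q + 3 * b) := by ring

lemma log_weight_add_le_expected_arcs {n k b p L : ℝ} (hk : 1 ≤ k) (hb : 1 ≤ b)
    (hkb : k * b ≤ n) (hp0 : 0 ≤ p) (hp1 : p ≤ 1) (hL : 2 * k * ((k + 2) * L) + k ≤ p * n)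
    (hsq : (k + 1) ^ 2 ≤ 2 * (p * n)) :
    (k + 2) * b * L + p * n / 4 ≤ p * ((n - (k - 1) * b) * b - b) := by
  set Y := p * ((n - (k - 1) * b) * b - b)
  have hrel : b * (n - k) ≤ k * ((n - (k - 1) * b) * b - b) := by
    nlinarith [mul_nonneg (sub_nonneg.2 hk) (sub_nonneg.2 hkb)]
  have habs : n - (k + 1) ^ 2 / 4 ≤ (n - (k - 1) * b) * b - b := by
    nlinarith [mul_nonneg (sub_nonneg.2 hb) (sub_nonneg.2 hkb), sq_nonneg (b - (k + 1) / 2)]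
  have hYrel : 2 * (k + 2) * b * L ≤ Y := by
    refine le_of_mul_le_mul_left ?_ (by linarith : 0 < k)
    calc k * (2 * (k + 2) * b * L) ≤ b * (p * n - k) := by nlinarith
      _ ≤ b * (p * n - p * k) := mul_le_mul_of_nonneg_left (by nlinarith) (by linarith)
      _ ≤ k * Y := by nlinarith
  have hYabs : p * n / 2 ≤ Y :=
    calc p * n / 2 ≤ p * n - p * ((k + 1) ^ 2 / 4) := by nlinarith
      _ ≤ Y := by nlinarith
  linarith

lemma choose_mul_choose_mul_choose_mul_pow_le_exp {n k b s : ℕ} {p : ℝ} (hk : 1 ≤ k)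
    (hb : 1 ≤ b) (hkb : k * b ≤ n) (hs : s ≤ b) (hp0 : 0 ≤ p) (hp1 : p ≤ 1)
    (hL : 2 * k * ((k + 2) * log n) + k ≤ p * n) (hsq : (k + 1) ^ 2 ≤ 2 * (p * n)) :
    (n.choose (n - (k - 1) * b) : ℝ) * (n.choose b : ℝ) *
        (((n - (k - 1) * b) * b).choose s : ℝ) * p ^ s *
        (1 - p) ^ ((n - (k - 1) * b) * b - s)
      ≤ exp (-(p * n) / 4) := by
  have hqlt : (k - 1) * b < n := by
    rw [Nat.sub_one_mul]; have := Nat.le_mul_of_pos_left b hk; omega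
  have hqn := hqlt.le
  have hn : (0 : ℝ) < n := by norm_cast; omega
  have hm : ((n - (k - 1) * b : ℕ) : ℝ) = n - (k - 1) * b := by
    rw [Nat.cast_sub hqn, Nat.cast_mul, Nat.cast_sub hk, Nat.cast_one]
  have hbinom : (n.choose (n - (k - 1) * b) : ℝ) * (n.choose b : ℝ) *
      (((n - (k - 1) * b) * b).choose s : ℝ) ≤ exp (((k + 2) * b) * log n) := by
    have hpow : exp (((k + 2) * b) * log n) = (n : ℝ) ^ ((k - 1) * b + 3 * b) := by
      conv_rhs => rw [← exp_log hn, ← exp_nat_mul]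
      congr 1
      push_cast [Nat.cast_sub hk]
      ring
    rw [hpow]
    exact_mod_cast choose_mul_choose_mul_choose_le hqn (by nlinarith) hs
  have htail : p ^ s * (1 - p) ^ ((n - (k - 1) * b) * b - s)
      ≤ exp (-(p * ((n - (k - 1) * b) * b - b))) := by
    have hsm : s ≤ (n - (k - 1) * b) * b := hs.trans (Nat.le_mul_of_pos_left b (by omega))
    have hexp :
        ((n - (k - 1) * b) * b - b : ℝ) ≤ (((n - (k - 1) * b) * b - s : ℕ) : ℝ) := by
      rw [Nat.cast_sub hsm, Nat.cast_mul, hm]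
      gcongr
    calc p ^ s * (1 - p) ^ ((n - (k - 1) * b) * b - s)
        ≤ 1 * exp (-(p * (((n - (k - 1) * b) * b - s : ℕ) : ℝ))) :=
          mul_le_mul (pow_le_one₀ hp0 hp1) (one_sub_pow_le_exp_neg_mul hp1 _)
            (pow_nonneg (by linarith) _) zero_le_one
      _ ≤ exp (-(p * ((n - (k - 1) * b) * b - b))) := by
        rw [one_mul]
        exact exp_le_exp.2 (neg_le_neg (mul_le_mul_of_nonneg_left hexp hp0))
  calc _ = (n.choose (n - (k - 1) * b) : ℝ) * (n.choose b : ℝ) *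
        (((n - (k - 1) * b) * b).choose s : ℝ) *
        (p ^ s * (1 - p) ^ ((n - (k - 1) * b) * b - s)) := by ring
    _ ≤ exp (((k + 2) * b) * log n) * exp (-(p * ((n - (k - 1) * b) * b - b))) :=
        mul_le_mul hbinom htail (by positivity) (by positivity)
    _ ≤ exp (-(p * n) / 4) := by
      rw [← exp_add]
      have := log_weight_add_le_expected_arcs (n := n) (b := b) (L := log n)
        (by exact_mod_cast hk) (by exact_mod_cast hb) (by exact_mod_cast hkb) hp0 hp1 hL hsq
      exact exp_le_exp.2 (by linarith)

open Finset Real in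
theorem total_bad_pairs_lt_general {k ℓ : ℕ} (hk : 2 ≤ k)
    {ε : ℝ} (hε : 0 < ε) (hε' : ε < 1 / (4 * ℓ)) :
    ∃ N : ℕ, ∀ n ≥ N,
      ∑ b ∈ Finset.Icc 1 (n / k),
        ∑ s ∈ Finset.Icc 1 (min b ⌈(n : ℝ) ^ (ε * ℓ)⌉₊),
          (n.choose (n - (k - 1) * b) : ℝ) * (n.choose b : ℝ) *
            (((n - (k - 1) * b) * b).choose s : ℝ) *
            ((n : ℝ) ^ (ε - 1)) ^ s *
            (1 - (n : ℝ) ^ (ε - 1)) ^ ((n - (k - 1) * b) * b - s)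
        < Real.exp (-(n : ℝ) ^ ε / 6) := by
  have hε1 : ε ≤ 1 := by
    refine hε'.le.trans ?_
    rcases ℓ.eq_zero_or_pos with rfl | hℓ
    · simp
    · rw [div_le_one (by positivity)]; norm_cast; omega
  obtain ⟨N, hN⟩ := eventually_atTop.1 <|
    (eventually_add_mul_log_le_rpow hε (k + (k + 1) ^ 2) (2 * k * (k + 2) + 24)).and
      (eventually_ge_atTop 1)
  refine ⟨N, fun n hn => ?_⟩
  obtain ⟨hlarge, hn1⟩ := hN n hn
  have hn0 : (0 : ℝ) < n := by exact_mod_cast hn1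
  have hlog : 0 ≤ log n := log_nonneg (by exact_mod_cast hn1)
  set p := (n : ℝ) ^ (ε - 1)
  have hpn : p * n = (n : ℝ) ^ ε := by
    rw [← rpow_add_one hn0.ne', sub_add_cancel]
  have hp0 : 0 ≤ p := rpow_nonneg hn0.le _
  have hp1 : p ≤ 1 := rpow_le_one_of_one_le_of_nonpos (by exact_mod_cast hn1) (by linarith)
  rw [← hpn] at hlarge ⊢
  calc _ ≤ (n : ℝ) * (n * exp (-(p * n) / 4)) := by
        refine sum_Icc_le_mul (Nat.div_le_self n k) (by positivity) fun b hb => ?_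
        rw [mem_Icc, Nat.le_div_iff_mul_le (by omega)] at hb
        refine sum_Icc_le_mul ((min_le_left _ _).trans (by nlinarith [hb.2])) (by positivity)
          fun s hs => ?_
        rw [mem_Icc] at hs
        exact choose_mul_choose_mul_choose_mul_pow_le_exp (by omega) hb.1 (by linarith [hb.2])
          (hs.2.trans (min_le_left _ _)) hp0 hp1 (by nlinarith) (by nlinarith)
    _ < exp (-(p * n) / 6) := mul_mul_exp_neg_div_four_lt hn0 (by
      nlinarith [mul_nonneg (by positivity : (0 : ℝ) ≤ 2 * k * (k + 2)) hlog])

open Finset Real in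
/-- The total expected number of bad pairs: summing the binomial bound
`L(b,s) ≤ C(n, n-(k-1)b)·C(n,b)·C((n-(k-1)b)·b, s)·p^s·(1-p)^{(n-(k-1)b)b - s}`
(with `p = n^{ε-1}`) over `1 ≤ b ≤ n/k` and `1 ≤ s ≤ min{b, ⌈n^{εℓ}⌉}` gives a
total less than `e^{-n^ε/6}` for all sufficiently large `n`. -/
theorem total_bad_pairs_lt {k ℓ : ℕ} (hk : 2 ≤ k) (hℓ : 3 ≤ ℓ)
    {ε : ℝ} (hε : 0 < ε) (hε' : ε < 1 / (4 * ℓ)) :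
    ∃ N : ℕ, ∀ n ≥ N,
      ∑ b ∈ Finset.Icc 1 (n / k),
        ∑ s ∈ Finset.Icc 1 (min b ⌈(n : ℝ) ^ (ε * ℓ)⌉₊),
          (n.choose (n - (k - 1) * b) : ℝ) * (n.choose b : ℝ) *
            (((n - (k - 1) * b) * b).choose s : ℝ) *
            ((n : ℝ) ^ (ε - 1)) ^ s *
            (1 - (n : ℝ) ^ (ε - 1)) ^ ((n - (k - 1) * b) * b - s)
        < Real.exp (-(n : ℝ) ^ ε / 6) :=
  total_bad_pairs_lt_general hk hε hε'
end

section
/- If C is not D-pointed — i.e., there exist acyclic homomorphisms f', f'' : D → C agreeing everywhere except at one vertex x₀, with f'(x₀)f''(x₀) an arc of C — and ψ : D* → D is a surjective acyclic homomorphism with |ψ⁻¹(x₀)| ≥ 2, with ψ⁻¹(x₀) partitioned into nonempty sets A and B such that no arc of D* joins A and B, then the map φ defined by φ(y) = f'(ψ(y)) for y ∉ B and φ(y) = f''(ψ(y)) for y ∈ B is an acyclic homomorphism D* → C that cannot be written as f ∘ ψ for any map f : D → C. -/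
open Relation Set

section

variable {α β γ : Type*}

def fiberArcs (r : α → α → Prop) (ρ : α → β) (x : β) (u v : α) : Prop :=
  ρ u = x ∧ ρ v = x ∧ r u v

lemma Relation.TransGen.fiberArcs_right {r : α → α → Prop} {ρ : α → β} {x : β} {y z : α}
    (h : TransGen (fiberArcs r ρ x) y z) : ρ z = x := by
  cases h with
  | single h => exact h.2.1
  | tail _ h => exact h.2.1

lemma transGen_map_or_fiberArcs {r : α → α → Prop} {s : β → β → Prop} {ψ : α → β}
    (h : ∀ u v, r u v → ψ u = ψ v ∨ s (ψ u) (ψ v)) {y z : α} (hyz : TransGen r y z) :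
    TransGen s (ψ y) (ψ z) ∨ TransGen (fiberArcs r ψ (ψ y)) y z := by
  induction hyz with
  | single hyz =>
    rcases h _ _ hyz with heq | hs
    · exact Or.inr (.single ⟨rfl, heq.symm, hyz⟩)
    · exact Or.inl (.single hs)
  | @tail b z _ hbz ih =>
    rcases h _ _ hbz with heq | hs
    · rcases ih with ih | ih
      · exact Or.inl (heq ▸ ih)
      · have hb := ih.fiberArcs_right
        exact Or.inr (ih.tail ⟨hb, heq ▸ hb, hbz⟩)
    · rcases ih with ih | ih
      · exact Or.inl (ih.tail hs)
      · exact Or.inl (.single (ih.fiberArcs_right ▸ hs))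

theorem AcyHom.comp {r : α → α → Prop} {s : β → β → Prop} {t : γ → γ → Prop}
    {f : β → γ} {ψ : α → β} (hf : AcyHom s t f) (hψ : AcyHom r s ψ) : AcyHom r t (f ∘ ψ) := by
  refine ⟨fun u v huv => ?_, fun c ⟨y, hy⟩ => ?_⟩
  · rcases hψ.1 u v huv with h | h
    · exact Or.inl (congrArg f h)
    · exact hf.1 _ _ h
  · have hstep : ∀ u v, fiberArcs r (f ∘ ψ) c u v → ψ u = ψ v ∨ fiberArcs s f c (ψ u) (ψ v) :=
      fun u v ⟨hu, hv, huv⟩ => (hψ.1 u v huv).imp_right fun h => ⟨hu, hv, h⟩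
    rcases transGen_map_or_fiberArcs hstep hy with h | h
    · exact hf.2 c ⟨ψ y, h⟩
    · exact hψ.2 (ψ y) ⟨y, TransGen.mono (fun u v ⟨hu, hv, _, _, huv⟩ => ⟨hu, hv, huv⟩) _ _ h⟩

theorem AcyHom.of_eqOn_compl {r : α → α → Prop} {s : β → β → Prop} {g h φ : α → β}
    (hg : AcyHom r s g) (hh : AcyHom r s h) {A B : Set α} {p q : β} (hpq : p ≠ q)
    (hφA : ∀ a ∈ A, φ a = p) (hφB : ∀ b ∈ B, φ b = q) (hφg : EqOn φ g Bᶜ) (hφh : EqOn φ h Aᶜ)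
    (hnoarc : ∀ u ∈ A, ∀ v ∈ B, ¬ r u v ∧ ¬ r v u) : AcyHom r s φ := by
  have hBA : ∀ b ∈ B, b ∉ A := fun b hb ha => hpq ((hφA b ha).symm.trans (hφB b hb))
  refine ⟨fun u v huv => ?_, fun c => ?_⟩
  · have hside : (u ∉ B ∧ v ∉ B) ∨ (u ∉ A ∧ v ∉ A) := by
      by_cases hu : u ∈ B
      · exact Or.inr ⟨hBA u hu, fun hv => (hnoarc v hv u hu).2 huv⟩
      by_cases hv : v ∈ B
      · exact Or.inr ⟨fun hu => (hnoarc u hu v hv).1 huv, hBA v hv⟩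
      exact Or.inl ⟨hu, hv⟩
    rcases hside with ⟨hu, hv⟩ | ⟨hu, hv⟩
    · rw [hφg hu, hφg hv]; exact hg.1 u v huv
    · rw [hφh hu, hφh hv]; exact hh.1 u v huv
  · have hfiber : (∀ a, φ a = c → g a = c) ∨ (∀ a, φ a = c → h a = c) := by
      by_cases hc : c = q
      · refine Or.inr fun a ha => ?_
        have haA : a ∉ A := fun haA => hpq ((hφA a haA).symm.trans (ha.trans hc))
        rwa [← hφh haA]
      · refine Or.inl fun a ha => ?_
        have haB : a ∉ B := fun haB => hc (ha.symm.trans (hφB a haB))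
        rwa [← hφg haB]
    rintro ⟨y, hy⟩
    rcases hfiber with H | H
    · exact hg.2 c ⟨y, TransGen.mono (fun u v ⟨hu, hv, huv⟩ => ⟨H u hu, H v hv, huv⟩) _ _ hy⟩
    · exact hh.2 c ⟨y, TransGen.mono (fun u v ⟨hu, hv, huv⟩ => ⟨H u hu, H v hv, huv⟩) _ _ hy⟩

end

theorem not_pointed_gives_nonfactoring_general {VD VC VS : Type*}
    (rD : VD → VD → Prop) (rC : VC → VC → Prop) (rS : VS → VS → Prop)
    (f' f'' : VD → VC) (hf' : AcyHom rD rC f') (hf'' : AcyHom rD rC f'')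
    (x₀ : VD) (hne : f' x₀ ≠ f'' x₀) (hagree : ∀ w, w ≠ x₀ → f' w = f'' w)
    (ψ : VS → VD) (hψ : AcyHom rS rD ψ)
    (A B : Set VS) (hA : A.Nonempty) (hB : B.Nonempty)
    (hAB : A ∪ B = ψ ⁻¹' {x₀}) (hdisj : Disjoint A B)
    (hnoarc : ∀ u ∈ A, ∀ v ∈ B, ¬ rS u v ∧ ¬ rS v u)
    (φ : VS → VC)
    (hφB : ∀ y ∈ B, φ y = f'' (ψ y)) (hφnB : ∀ y ∉ B, φ y = f' (ψ y)) :
    AcyHom rS rC φ ∧ ¬ ∃ f : VD → VC, φ = f ∘ ψ := by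
  have hfiber : ∀ y ∈ A ∪ B, ψ y = x₀ := fun y hy => by rwa [hAB] at hy
  have hφA : ∀ a ∈ A, φ a = f' x₀ := fun a ha => by
    rw [hφnB a (disjoint_left.mp hdisj ha), hfiber a (.inl ha)]
  have hφB' : ∀ b ∈ B, φ b = f'' x₀ := fun b hb => by rw [hφB b hb, hfiber b (.inr hb)]
  have hφA' : EqOn φ (f'' ∘ ψ) Aᶜ := fun y hyA => by
    by_cases hyB : y ∈ B
    · exact hφB y hyB
    · have hy : ψ y ≠ x₀ := fun h => (hAB.ge h).elim hyA hyB
      rw [hφnB y hyB]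
      exact hagree _ hy
  refine ⟨(hf'.comp hψ).of_eqOn_compl (hf''.comp hψ) hne hφA hφB' (fun y hy => hφnB y hy) hφA'
    hnoarc, ?_⟩
  rintro ⟨f, rfl⟩
  obtain ⟨a, ha⟩ := hA
  obtain ⟨b, hb⟩ := hB
  have h₁ := hφA a ha
  have h₂ := hφB' b hb
  rw [Function.comp_apply, hfiber a (.inl ha)] at h₁
  rw [Function.comp_apply, hfiber b (.inr hb)] at h₂
  exact hne (h₁.symm.trans h₂)

/-- Necessity of `D`-pointedness: suppose `f', f'' : D → C` are acyclic
homomorphisms agreeing everywhere except at `x₀`, with `f'(x₀)f''(x₀)` an arc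
of `C`, and `ψ : D* → D` is a surjective acyclic homomorphism whose fiber over
`x₀` is split into nonempty sets `A`, `B` with no arc of `D*` joining `A` and `B`.
Then the map `φ` given by `f' ∘ ψ` off `B` and `f'' ∘ ψ` on `B` is an acyclic
homomorphism `D* → C` that is not of the form `f ∘ ψ` for any `f : D → C`. -/
theorem not_pointed_gives_nonfactoring {VD VC VS : Type*}
    [Fintype VD] [Fintype VC] [Fintype VS]
    (rD : VD → VD → Prop) (rC : VC → VC → Prop) (rS : VS → VS → Prop)
    (f' f'' : VD → VC) (hf' : AcyHom rD rC f') (hf'' : AcyHom rD rC f'')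
    (x₀ : VD) (hne : f' x₀ ≠ f'' x₀) (hagree : ∀ w, w ≠ x₀ → f' w = f'' w)
    (harc : rC (f' x₀) (f'' x₀))
    (ψ : VS → VD) (hψ : AcyHom rS rD ψ) (hψsurj : Function.Surjective ψ)
    (A B : Set VS) (hA : A.Nonempty) (hB : B.Nonempty)
    (hAB : A ∪ B = ψ ⁻¹' {x₀}) (hdisj : Disjoint A B)
    (hnoarc : ∀ u ∈ A, ∀ v ∈ B, ¬ rS u v ∧ ¬ rS v u)
    (φ : VS → VC)
    (hφB : ∀ y ∈ B, φ y = f'' (ψ y)) (hφnB : ∀ y ∉ B, φ y = f' (ψ y)) :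
    AcyHom rS rC φ ∧ ¬ ∃ f : VD → VC, φ = f ∘ ψ :=
  not_pointed_gives_nonfactoring_general rD rC rS f' f'' hf' hf'' x₀ hne hagree ψ hψ A B hA hB hAB
    hdisj hnoarc φ hφB hφnB
end
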